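/- Let X be a spike prior such that each X_n (as an ℝⁿ-valued random variable) is (σ²/n)-subgaussian for some constant σ > 0. If 0 ≤ λ < 1/σ, then GWig(λ,X) is contiguous to GWig(0). -/

import Mathlib

open MeasureTheory ProbabilityTheory Filter Topology ENNReal

noncomputable section

/-- Contiguity of a sequence of measures: `Q ◁ P`. -/
def Contiguous {Ω : ℕ → Type} [∀ n, MeasurableSpace (Ω n)]
    (Q P : ∀ n, Measure (Ω n)) : Prop :=
  ∀ A : ∀ n, Set (Ω n), (∀ n, MeasurableSet (A n)) →
    Tendsto (fun n => P n (A n)) atTop (𝓝 0) →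
    Tendsto (fun n => Q n (A n)) atTop (𝓝 0)

/-- A spike prior: a family of probability measures on ℝⁿ with ‖x‖ → 1 in probability. -/
structure SpikePrior where
  μ : ∀ n : ℕ, Measure (EuclideanSpace ℝ (Fin n))
  isProb : ∀ n, IsProbabilityMeasure (μ n)
  norm_tendsto_one : ∀ ε : ℝ, 0 < ε →
    Tendsto (fun n => μ n {x | ε < |‖x‖ - 1|}) atTop (𝓝 0)

/-- The second moment `E_{x,x'} exp((n λ²/2) ⟨x,x'⟩²)` (valued in `[0,∞]`). -/
def wignerSecondMoment (μ : ∀ n : ℕ, Measure (EuclideanSpace ℝ (Fin n)))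
    (lam : ℝ) (n : ℕ) : ℝ≥0∞ :=
  ∫⁻ p, ENNReal.ofReal (Real.exp ((n * lam ^ 2 / 2) * (inner ℝ p.1 p.2 : ℝ) ^ 2))
    ∂((μ n).prod (μ n))

/-- Wigner noise matrix: symmetric, entries independent up to symmetry, off-diagonal `P`,
diagonal `Pd`. -/
def wignerNoise (P Pd : Measure ℝ) (n : ℕ) : Measure (Fin n → Fin n → ℝ) :=
  (Measure.pi fun p : Fin n × Fin n => if p.1 = p.2 then Pd else P).map
    (fun g i j => if i ≤ j then g (i, j) else g (j, i))

/-- The general spiked Wigner model `Wig(λ, P, Pd, μ)`: law of `λ x xᵀ + n^{-1/2} W`. -/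
def spikedWigner (lam : ℝ) (P Pd : Measure ℝ) {n : ℕ}
    (μ : Measure (EuclideanSpace ℝ (Fin n))) : Measure (Fin n → Fin n → ℝ) :=
  (μ.prod (wignerNoise P Pd n)).map
    (fun q i j => lam * (q.1 i * q.1 j) + (Real.sqrt n)⁻¹ * q.2 i j)

/-- The unspiked Wigner model `Wig(0, P, Pd)`: law of `n^{-1/2} W`. -/
def unspikedWigner (P Pd : Measure ℝ) (n : ℕ) : Measure (Fin n → Fin n → ℝ) :=
  (wignerNoise P Pd n).map (fun W i j => (Real.sqrt n)⁻¹ * W i j)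

/-- Spiked Gaussian Wigner model `GWig(λ, μ)` (GOE noise). -/
def GWig (lam : ℝ) {n : ℕ} (μ : Measure (EuclideanSpace ℝ (Fin n))) :
    Measure (Fin n → Fin n → ℝ) :=
  spikedWigner lam (gaussianReal 0 1) (gaussianReal 0 2) μ

/-- Unspiked Gaussian Wigner model `GWig(0)`. -/
def GWig0 (n : ℕ) : Measure (Fin n → Fin n → ℝ) :=
  unspikedWigner (gaussianReal 0 1) (gaussianReal 0 2) n

/-- A real random variable `Z` on `(Ω, μ)` is `s2`-subgaussian. -/
def IsSubgaussian {Ω : Type} [MeasurableSpace Ω] (μ : Measure Ω) (Z : Ω → ℝ) (s2 : ℝ) : Prop :=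
  Integrable Z μ ∧ (∫ ω, Z ω ∂μ) = 0 ∧
    ∀ v : ℝ, ∫⁻ ω, ENNReal.ofReal (Real.exp (v * Z ω)) ∂μ
      ≤ ENNReal.ofReal (Real.exp (s2 * v ^ 2 / 2))

/-- An ℝⁿ-valued random variable (given by its law `μ`) is `s2`-subgaussian. -/
def IsSubgaussianVec {n : ℕ} (μ : Measure (EuclideanSpace ℝ (Fin n))) (s2 : ℝ) : Prop :=
  Integrable id μ ∧ (∫ x, x ∂μ) = 0 ∧
    ∀ v : EuclideanSpace ℝ (Fin n),
      ∫⁻ x, ENNReal.ofReal (Real.exp ((inner ℝ v x : ℝ))) ∂μ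
        ≤ ENNReal.ofReal (Real.exp (s2 * ‖v‖ ^ 2 / 2))

/-- `λ*_X`: the supremum of λ ≥ 0 for which the Wigner second moment stays bounded. -/
def lamStar (μ : ∀ n : ℕ, Measure (EuclideanSpace ℝ (Fin n))) : ℝ :=
  sSup {lam : ℝ | 0 ≤ lam ∧
    ∃ B : ℝ≥0∞, B ≠ ⊤ ∧ ∀ n, wignerSecondMoment μ lam n ≤ B}

/-- Standard Gaussian on `EuclideanSpace ℝ (Fin n)`. -/
def stdGaussianE (n : ℕ) : Measure (EuclideanSpace ℝ (Fin n)) :=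
  (Measure.pi fun _ : Fin n => gaussianReal 0 1).map
    (fun y => (WithLp.equiv 2 (Fin n → ℝ)).symm y)

/-- The square root of a positive semidefinite matrix (removed from Mathlib; old definition). -/
def Matrix.PosSemidef.sqrt {n : Type*} [Fintype n] [DecidableEq n] {A : Matrix n n ℝ}
    (hA : A.PosSemidef) : Matrix n n ℝ :=
  hA.1.eigenvectorUnitary.1 * Matrix.diagonal ((↑) ∘ Real.sqrt ∘ hA.1.eigenvalues) *
    (star hA.1.eigenvectorUnitary : Matrix n n ℝ)

open scoped Classical in
/-- Centered multivariate Gaussian `N(0, S)` (zero measure when `S` is not psd). -/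
def gaussianCov {n : ℕ} (S : Matrix (Fin n) (Fin n) ℝ) : Measure (EuclideanSpace ℝ (Fin n)) :=
  if h : S.PosSemidef then
    (stdGaussianE n).map
      (fun w => (WithLp.equiv 2 (Fin n → ℝ)).symm (h.sqrt.mulVec (fun i => w i)))
  else 0

/-- The spiked Wishart model: the joint law of `N` i.i.d. samples from `N(0, I + β x xᵀ)`
with `x ~ μ`. -/
def wishartSpiked (β : ℝ) {n : ℕ} (μ : Measure (EuclideanSpace ℝ (Fin n))) (N : ℕ) :
    Measure (Fin N → EuclideanSpace ℝ (Fin n)) :=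
  μ.bind (fun x => Measure.pi fun _ : Fin N =>
    gaussianCov (1 + β • Matrix.vecMulVec (fun i => x i) (fun i => x i)))

/-- The unspiked Wishart model: `N` i.i.d. samples from `N(0, I)`. -/
def wishartNull (n N : ℕ) : Measure (Fin N → EuclideanSpace ℝ (Fin n)) :=
  Measure.pi fun _ : Fin N => stdGaussianE n

/-- The i.i.d. spike prior `iid(π/√n)`. -/
def iidPrior (π : Measure ℝ) (n : ℕ) : Measure (EuclideanSpace ℝ (Fin n)) :=
  (Measure.pi fun _ : Fin n => π).map
    (fun y => (WithLp.equiv 2 (Fin n → ℝ)).symm (fun i => y i / Real.sqrt n))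

/-- `f` is a rate function for the prior `μ`. -/
def IsRateFunction (μ : ∀ n : ℕ, Measure (EuclideanSpace ℝ (Fin n))) (f : ℝ → ℝ) : Prop :=
  (∀ t ∈ Set.Ico (0:ℝ) 1, 0 ≤ f t) ∧
  ∃ b : ℕ → ℝ → ℝ,
    (∀ n : ℕ, ∀ t ∈ Set.Ico (0:ℝ) 1,
      b n t ≤ -(1 / (n:ℝ)) *
        Real.log ((((μ n).prod (μ n)) {p | t ≤ |(inner ℝ p.1 p.2 : ℝ)|}).toReal)) ∧
    TendstoUniformlyOn b f atTop (Set.Ico 0 1)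

/-- The rate function `f` admits a local Chernoff bound for the prior `μ`. -/
def HasLocalChernoff (μ : ∀ n : ℕ, Measure (EuclideanSpace ℝ (Fin n))) (f : ℝ → ℝ) : Prop :=
  ∃ T : ℝ, 0 < T ∧ ∃ C : ℝ, 0 < C ∧ ∀ n : ℕ, ∀ t ∈ Set.Icc (0:ℝ) T,
    ((μ n).prod (μ n)) {p | t ≤ |(inner ℝ p.1 p.2 : ℝ)|}
      ≤ ENNReal.ofReal (C * Real.exp (-(n:ℝ) * f t))

/-- The function `F(β,t)` appearing in the Wishart lower bound (Theorem 5.9). -/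
def wishartF (β t : ℝ) : ℝ :=
  (1 + β) * (t * ((Real.sqrt (((1 - t ^ 2) / (2 * t * (β + 1))) ^ 2 + 1)
      - (1 - t ^ 2) / (2 * t * (β + 1))) - t) / (1 - t ^ 2))
    + (1 / 2) * Real.log ((1 - (Real.sqrt (((1 - t ^ 2) / (2 * t * (β + 1))) ^ 2 + 1)
      - (1 - t ^ 2) / (2 * t * (β + 1))) ^ 2) / (1 - t ^ 2))

/-! The second moment method. Writing the GOE as the symmetrisation of an array of independent
Gaussians, `GWig(λ, ν)` is a mixture over `x ~ ν` of translates of `GWig(0)`, so it has a density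
`L = E_x[dN(m_x)/dN(0)]` with respect to it, and by Cauchy–Schwarz
`GWig(λ, ν)(A) ≤ GWig(0)(A)^{1/2} (E L²)^{1/2}` with `E L² = E_{x,x'} exp(n λ² ⟨x,x'⟩² / 2)`.
Subgaussianity bounds this second moment uniformly in `n` once the prior is truncated to
`‖x‖ ≤ 1 + ε` with `σ λ (1 + ε) < 1`; the mass removed by the truncation tends to zero because
`‖x‖ → 1` in probability. -/

open Real
open scoped NNReal

namespace MeasureTheory

variable {ι : Type*} [Fintype ι]

lemma lintegral_pi_prod_eq_prod {Ω : ι → Type*} [∀ i, MeasurableSpace (Ω i)]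
    (μ : ∀ i, Measure (Ω i)) [∀ i, IsProbabilityMeasure (μ i)]
    {f : ∀ i, Ω i → ℝ≥0∞} (hf : ∀ i, Measurable (f i)) :
    ∫⁻ ω, ∏ i, f i (ω i) ∂Measure.pi μ = ∏ i, ∫⁻ w, f i w ∂μ i := by
  rw [lintegral_prod_eq_prod_lintegral_of_indepFun _ _
      (iIndepFun_pi fun i => (hf i).aemeasurable) fun i => (hf i).comp (measurable_pi_apply i)]
  exact Finset.prod_congr rfl fun i _ => (measurePreserving_eval μ i).lintegral_comp (hf i)

lemma pi_withDensity_eq_withDensity_prod {Ω : ι → Type*} [∀ i, MeasurableSpace (Ω i)]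
    (μ : ∀ i, Measure (Ω i)) [∀ i, IsProbabilityMeasure (μ i)]
    {f : ∀ i, Ω i → ℝ≥0∞} (hf : ∀ i, Measurable (f i))
    [∀ i, SigmaFinite ((μ i).withDensity (f i))] :
    Measure.pi (fun i => (μ i).withDensity (f i))
      = (Measure.pi μ).withDensity fun ω => ∏ i, f i (ω i) := by
  refine Measure.pi_eq fun s hs => ?_
  have hind : (Set.univ.pi s).indicator (fun ω => ∏ i, f i (ω i))
      = fun ω => ∏ i, (s i).indicator (f i) (ω i) := by
    funext ω
    by_cases h : ω ∈ Set.univ.pi s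
    · rw [Set.indicator_of_mem h]
      exact Finset.prod_congr rfl fun i _ => (Set.indicator_of_mem (h i (Set.mem_univ i)) _).symm
    · rw [Set.indicator_of_notMem h]
      obtain ⟨i, hi⟩ := not_forall.mp (Set.mem_univ_pi.not.mp h)
      exact (Finset.prod_eq_zero (Finset.mem_univ i) (Set.indicator_of_notMem hi _)).symm
  rw [withDensity_apply _ (.univ_pi hs), ← lintegral_indicator (.univ_pi hs), hind,
    lintegral_pi_prod_eq_prod μ fun i => (hf i).indicator (hs i)]
  exact Finset.prod_congr rfl fun i _ => by
    rw [withDensity_apply _ (hs i), lintegral_indicator (hs i)]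

lemma withDensity_apply_le_sqrt_mul_sqrt {α : Type*} [MeasurableSpace α] (μ : Measure α)
    {f : α → ℝ≥0∞} (hf : AEMeasurable f μ) {s : Set α} (hs : MeasurableSet s) :
    μ.withDensity f s ≤ μ s ^ (1 / 2 : ℝ) * (∫⁻ a, f a ^ 2 ∂μ) ^ (1 / 2 : ℝ) := by
  have hind : ∀ a, s.indicator f a = s.indicator 1 a * f a := fun a => by
    by_cases ha : a ∈ s <;> simp [ha]
  have hind2 : ∀ a, s.indicator (fun _ => (1 : ℝ≥0∞)) a ^ (2 : ℝ) = s.indicator 1 a := fun a => by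
    by_cases ha : a ∈ s <;> simp [ha]
  rw [withDensity_apply _ hs, ← lintegral_indicator hs]
  simp_rw [hind]
  refine (ENNReal.lintegral_mul_le_Lp_mul_Lq μ Real.HolderConjugate.two_two
    (aemeasurable_one.indicator hs) hf).trans_eq ?_
  simp_rw [hind2, ENNReal.rpow_two]
  rw [lintegral_indicator_one hs, one_div]

end MeasureTheory

namespace ProbabilityTheory

lemma lintegral_ofReal_exp_affine_gaussianReal (v : ℝ≥0) (a b : ℝ) :
    ∫⁻ w, ENNReal.ofReal (exp (a * w + b)) ∂gaussianReal 0 v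
      = ENNReal.ofReal (exp (v * a ^ 2 / 2 + b)) := by
  have hsplit : ∀ w : ℝ, exp (a * w + b) = exp b * exp (a * w) := fun w => by
    rw [exp_add, mul_comm]
  simp_rw [hsplit]
  rw [← ofReal_integral_eq_lintegral_ofReal
      ((integrable_exp_mul_gaussianReal a).const_mul _) (ae_of_all _ fun w => by positivity),
    integral_const_mul, ← mgf, mgf_fun_id_gaussianReal, ← exp_add]
  ring_nf

lemma gaussianReal_map_add_const_eq_withDensity {v : ℝ≥0} (hv : v ≠ 0) (m : ℝ) :
    (gaussianReal 0 v).map (· + m)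
      = (gaussianReal 0 v).withDensity fun w => ENNReal.ofReal (exp ((m * w - m ^ 2 / 2) / v)) := by
  rw [gaussianReal_map_add_const, zero_add, gaussianReal_of_var_ne_zero m hv,
    gaussianReal_of_var_ne_zero 0 hv,
    ← withDensity_mul _ (measurable_gaussianPDF 0 v) (by fun_prop)]
  congr 1
  funext w
  simp only [Pi.mul_apply, gaussianPDF, gaussianPDFReal, sub_zero]
  rw [← ENNReal.ofReal_mul (by positivity)]
  congr 1
  rw [mul_assoc _ (exp _), ← exp_add]
  congr 2
  field_simp
  ring

lemma lintegral_ofReal_exp_mul_sq_gaussianReal {c : ℝ} (hc : c < 1) :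
    ∫⁻ w, ENNReal.ofReal (exp (c * w ^ 2 / 2)) ∂gaussianReal 0 1
      = ENNReal.ofReal (√(1 - c))⁻¹ := by
  have hb : 0 < (1 - c) / 2 := by linarith
  rw [gaussianReal_of_var_ne_zero 0 one_ne_zero,
    lintegral_withDensity_eq_lintegral_mul _ (measurable_gaussianPDF 0 1) (by fun_prop)]
  have hpt : ∀ w, (gaussianPDF 0 1 * fun w => ENNReal.ofReal (exp (c * w ^ 2 / 2))) w
      = ENNReal.ofReal ((√(2 * π))⁻¹ * exp (-((1 - c) / 2) * w ^ 2)) := fun w => by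
    simp only [Pi.mul_apply, gaussianPDF, gaussianPDFReal, sub_zero, NNReal.coe_one, mul_one]
    rw [← ENNReal.ofReal_mul (by positivity), mul_assoc, ← exp_add]
    ring_nf
  simp_rw [hpt]
  rw [← ofReal_integral_eq_lintegral_ofReal ((integrable_exp_neg_mul_sq hb).const_mul _)
      (ae_of_all _ fun w => by positivity), integral_const_mul, integral_gaussian]
  congr 1
  rw [show π / ((1 - c) / 2) = 2 * π / (1 - c) by field_simp, sqrt_div' _ (by linarith)]
  field_simp

section GaussianPi

variable {ι : Type*} [Fintype ι]

def gaussianPi (v : ι → ℝ≥0) : Measure (ι → ℝ) :=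
  Measure.pi fun i => gaussianReal 0 (v i)

instance (v : ι → ℝ≥0) : IsProbabilityMeasure (gaussianPi v) := by
  unfold gaussianPi; infer_instance

def gaussianShiftDensity (v : ι → ℝ≥0) (m g : ι → ℝ) : ℝ≥0∞ :=
  ∏ i, ENNReal.ofReal (exp ((m i * g i - m i ^ 2 / 2) / v i))

@[fun_prop]
lemma _root_.Measurable.gaussianShiftDensity {α : Type*} [MeasurableSpace α] (v : ι → ℝ≥0)
    {m g : α → ι → ℝ} (hm : Measurable m) (hg : Measurable g) :
    Measurable fun a => gaussianShiftDensity v (m a) (g a) := by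
  unfold ProbabilityTheory.gaussianShiftDensity
  exact Finset.measurable_prod _ fun i _ => by fun_prop

lemma gaussianPi_map_add_const {v : ι → ℝ≥0} (hv : ∀ i, v i ≠ 0) (m : ι → ℝ) :
    (gaussianPi v).map (· + m) = (gaussianPi v).withDensity (gaussianShiftDensity v m) := by
  have hmap : (gaussianPi v).map (· + m)
      = Measure.pi fun i => (gaussianReal 0 (v i)).map (· + m i) :=
    Measure.pi_map_pi fun i => (measurable_add_const (m i)).aemeasurable
  have : ∀ i, SigmaFinite ((gaussianReal 0 (v i)).withDensity
      fun w => ENNReal.ofReal (exp ((m i * w - m i ^ 2 / 2) / v i))) := fun i => by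
    rw [← gaussianReal_map_add_const_eq_withDensity (hv i)]
    infer_instance
  rw [hmap]
  simp_rw [gaussianReal_map_add_const_eq_withDensity (hv _)]
  exact pi_withDensity_eq_withDensity_prod _ fun i => by fun_prop

lemma lintegral_gaussianShiftDensity_mul (v : ι → ℝ≥0) (hv : ∀ i, v i ≠ 0) (m m' : ι → ℝ) :
    ∫⁻ g, gaussianShiftDensity v m g * gaussianShiftDensity v m' g ∂gaussianPi v
      = ENNReal.ofReal (exp (∑ i, m i * m' i / v i)) := by
  set a : ι → ℝ := fun i => (m i + m' i) / v i
  set b : ι → ℝ := fun i => -(m i ^ 2 + m' i ^ 2) / (2 * v i)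
  have hprod : ∀ g, gaussianShiftDensity v m g * gaussianShiftDensity v m' g
      = ∏ i, ENNReal.ofReal (exp (a i * g i + b i)) := fun g => by
    rw [gaussianShiftDensity, gaussianShiftDensity, ← Finset.prod_mul_distrib]
    refine Finset.prod_congr rfl fun i _ => ?_
    rw [← ENNReal.ofReal_mul (exp_nonneg _), ← exp_add]
    have := NNReal.coe_ne_zero.mpr (hv i)
    congr 2
    simp only [a, b]
    field_simp
    ring
  simp_rw [hprod]
  rw [gaussianPi, lintegral_pi_prod_eq_prod (f := fun i w => ENNReal.ofReal (exp (a i * w + b i)))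
    _ fun i => by fun_prop]
  simp_rw [lintegral_ofReal_exp_affine_gaussianReal]
  rw [← ENNReal.ofReal_prod_of_nonneg fun i _ => exp_nonneg _, ← exp_sum]
  congr 2
  refine Finset.sum_congr rfl fun i _ => ?_
  have := NNReal.coe_ne_zero.mpr (hv i)
  simp only [a, b]
  field_simp
  ring

variable {v : ι → ℝ≥0} {E : Type*} [MeasurableSpace E]

lemma map_prod_gaussianPi_add_eq_withDensity (hv : ∀ i, v i ≠ 0) (ν : Measure E) [SFinite ν]
    {m : E → ι → ℝ} (hm : Measurable m) :
    (ν.prod (gaussianPi v)).map (fun q => q.2 + m q.1)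
      = (gaussianPi v).withDensity fun g => ∫⁻ x, gaussianShiftDensity v (m x) g ∂ν := by
  have hmeas : Measurable fun q : E × (ι → ℝ) => q.2 + m q.1 := by fun_prop
  ext B hB
  rw [Measure.map_apply hmeas hB, Measure.prod_apply (hmeas hB),
    withDensity_apply _ hB, lintegral_lintegral_swap (by fun_prop)]
  refine lintegral_congr fun x => ?_
  rw [← withDensity_apply _ hB, ← gaussianPi_map_add_const hv,
    Measure.map_apply (measurable_add_const _) hB]
  rfl

lemma lintegral_sq_lintegral_gaussianShiftDensity (hv : ∀ i, v i ≠ 0) (ν : Measure E) [SFinite ν]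
    {m : E → ι → ℝ} (hm : Measurable m) :
    ∫⁻ g, (∫⁻ x, gaussianShiftDensity v (m x) g ∂ν) ^ 2 ∂gaussianPi v
      = ∫⁻ q, ENNReal.ofReal (exp (∑ i, m q.1 i * m q.2 i / v i)) ∂ν.prod ν := by
  have hsq : ∀ g, (∫⁻ x, gaussianShiftDensity v (m x) g ∂ν) ^ 2
      = ∫⁻ q, gaussianShiftDensity v (m q.1) g * gaussianShiftDensity v (m q.2) g ∂ν.prod ν :=
    fun g => by
      have hg : AEMeasurable (fun x => gaussianShiftDensity v (m x) g) ν := by fun_prop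
      rw [sq, lintegral_prod_mul hg hg]
  simp_rw [hsq]
  rw [lintegral_lintegral_swap (by fun_prop)]
  exact lintegral_congr fun q => lintegral_gaussianShiftDensity_mul v hv _ _

lemma map_prod_gaussianPi_add_apply_le (hv : ∀ i, v i ≠ 0) (ν : Measure E) [SFinite ν]
    {m : E → ι → ℝ} (hm : Measurable m) {Y : Type*} [MeasurableSpace Y]
    {T : (ι → ℝ) → Y} (hT : Measurable T) {A : Set Y} (hA : MeasurableSet A) :
    (ν.prod (gaussianPi v)).map (fun q => T (q.2 + m q.1)) A
      ≤ (gaussianPi v).map T A ^ (1 / 2 : ℝ)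
        * (∫⁻ q, ENNReal.ofReal (exp (∑ i, m q.1 i * m q.2 i / v i)) ∂ν.prod ν) ^ (1 / 2 : ℝ) := by
  have hadd : Measurable fun q : E × (ι → ℝ) => q.2 + m q.1 := by fun_prop
  rw [show (fun q => T (q.2 + m q.1)) = T ∘ fun q : E × (ι → ℝ) => q.2 + m q.1 from rfl,
    ← Measure.map_map hT hadd, Measure.map_apply hT hA, Measure.map_apply hT hA,
    map_prod_gaussianPi_add_eq_withDensity hv ν hm,
    ← lintegral_sq_lintegral_gaussianShiftDensity hv ν hm]
  exact withDensity_apply_le_sqrt_mul_sqrt _ (by fun_prop) (hT hA)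

end GaussianPi

variable {E : Type*} [NormedAddCommGroup E] [InnerProductSpace ℝ E] [MeasurableSpace E]
  [BorelSpace E] [SecondCountableTopology E]

/- Linearise the square with a Gaussian, `exp (a t² / 2) = E_w exp (√a t w)`, then apply the
subgaussian bound in each of the two variables. -/
lemma lintegral_exp_inner_sq_restrict_le (μ : Measure E) {s a R : ℝ} (hs : 0 ≤ s) (ha : 0 ≤ a)
    (hmgf : ∀ v : E, ∫⁻ x, ENNReal.ofReal (exp (inner ℝ v x)) ∂μ
      ≤ ENNReal.ofReal (exp (s * ‖v‖ ^ 2 / 2)))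
    {S : Set E} (hS : ∀ x ∈ S, ‖x‖ ≤ R) (hc : a * s * R ^ 2 < 1) :
    ∫⁻ q, ENNReal.ofReal (exp (a / 2 * inner ℝ q.1 q.2 ^ 2)) ∂(μ.restrict S).prod (μ.restrict S)
      ≤ ENNReal.ofReal (√(1 - a * s * R ^ 2))⁻¹ := by
  set c := a * s * R ^ 2
  have hlin : ∀ t : ℝ, ENNReal.ofReal (exp (a / 2 * t ^ 2))
      = ∫⁻ w, ENNReal.ofReal (exp (√a * t * w + 0)) ∂gaussianReal 0 1 := fun t => by
    rw [lintegral_ofReal_exp_affine_gaussianReal, NNReal.coe_one, mul_pow, sq_sqrt ha]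
    ring_nf
  have huniv : μ Set.univ ≤ 1 := by simpa using hmgf 0
  have : IsFiniteMeasure μ := ⟨huniv.trans_lt ENNReal.one_lt_top⟩
  have hmass : μ S ≤ 1 := (measure_mono (Set.subset_univ S)).trans huniv
  have hinner : ∀ w x, x ∈ S → ∫⁻ x', ENNReal.ofReal (exp (√a * inner ℝ x x' * w + 0)) ∂μ
      ≤ ENNReal.ofReal (exp (c * w ^ 2 / 2)) := fun w x hx => by
    have hnorm : ‖x‖ ^ 2 ≤ R ^ 2 := pow_le_pow_left₀ (norm_nonneg x) (hS x hx) 2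
    calc ∫⁻ x', ENNReal.ofReal (exp (√a * inner ℝ x x' * w + 0)) ∂μ
        = ∫⁻ x', ENNReal.ofReal (exp (inner ℝ ((√a * w) • x) x')) ∂μ := by
          refine lintegral_congr fun x' => ?_
          rw [real_inner_smul_left, add_zero, mul_right_comm]
      _ ≤ ENNReal.ofReal (exp (s * ‖(√a * w) • x‖ ^ 2 / 2)) := hmgf _
      _ ≤ ENNReal.ofReal (exp (c * w ^ 2 / 2)) := by
          refine ENNReal.ofReal_le_ofReal (exp_le_exp.mpr ?_)
          rw [norm_smul, mul_pow, Real.norm_eq_abs, sq_abs, mul_pow, sq_sqrt ha]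
          have : 0 ≤ s * a * w ^ 2 := by positivity
          nlinarith
  have hgauss : ∀ w, ∫⁻ q, ENNReal.ofReal (exp (√a * inner ℝ q.1 q.2 * w + 0))
      ∂(μ.restrict S).prod (μ.restrict S) ≤ ENNReal.ofReal (exp (c * w ^ 2 / 2)) := fun w => by
    rw [lintegral_prod _ (by fun_prop)]
    calc ∫⁻ x in S, ∫⁻ x' in S, ENNReal.ofReal (exp (√a * inner ℝ x x' * w + 0)) ∂μ ∂μ
        ≤ ∫⁻ x in S, ENNReal.ofReal (exp (c * w ^ 2 / 2)) ∂μ :=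
          setLIntegral_mono measurable_const fun x hx =>
            (lintegral_mono' Measure.restrict_le_self le_rfl).trans (hinner w x hx)
      _ ≤ ENNReal.ofReal (exp (c * w ^ 2 / 2)) := by
          rw [setLIntegral_const]
          exact mul_le_of_le_one_right' hmass
  calc ∫⁻ q, ENNReal.ofReal (exp (a / 2 * inner ℝ q.1 q.2 ^ 2))
        ∂(μ.restrict S).prod (μ.restrict S)
      = ∫⁻ w, ∫⁻ q, ENNReal.ofReal (exp (√a * inner ℝ q.1 q.2 * w + 0))
          ∂(μ.restrict S).prod (μ.restrict S) ∂gaussianReal 0 1 := by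
        simp_rw [hlin]
        exact lintegral_lintegral_swap (by fun_prop)
    _ ≤ ∫⁻ w, ENNReal.ofReal (exp (c * w ^ 2 / 2)) ∂gaussianReal 0 1 := lintegral_mono hgauss
    _ = ENNReal.ofReal (√(1 - c))⁻¹ := lintegral_ofReal_exp_mul_sq_gaussianReal hc

end ProbabilityTheory

/- The GOE is read off the upper triangle of a Gaussian array with variance `2` on the diagonal;
after scaling by `√n`, the spike `λ x xᵀ` becomes the mean `√n λ xᵢ xⱼ` of the entry `(i, j)`,
`i ≤ j`. -/

def goeVariance (n : ℕ) (p : Fin n × Fin n) : ℝ≥0 := if p.1 = p.2 then 2 else 1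

def wignerSpike (lam : ℝ) (n : ℕ) (x : EuclideanSpace ℝ (Fin n)) (p : Fin n × Fin n) : ℝ :=
  if p.1 ≤ p.2 then √n * lam * (x p.1 * x p.2) else 0

def symmetrizeUpper (n : ℕ) (g : Fin n × Fin n → ℝ) : Fin n → Fin n → ℝ :=
  fun i j => if i ≤ j then g (i, j) else g (j, i)

def wignerEmbed (n : ℕ) (g : Fin n × Fin n → ℝ) : Fin n → Fin n → ℝ :=
  fun i j => (√n)⁻¹ * symmetrizeUpper n g i j

lemma goeVariance_ne_zero (n : ℕ) (p : Fin n × Fin n) : goeVariance n p ≠ 0 := by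
  unfold goeVariance; split <;> norm_num

@[fun_prop]
lemma measurable_wignerSpike (lam : ℝ) (n : ℕ) : Measurable (wignerSpike lam n) :=
  measurable_pi_lambda _ fun p => by unfold wignerSpike; split <;> fun_prop

@[fun_prop]
lemma measurable_symmetrizeUpper (n : ℕ) : Measurable (symmetrizeUpper n) :=
  measurable_pi_lambda _ fun i => measurable_pi_lambda _ fun j => by
    unfold symmetrizeUpper; split <;> fun_prop

@[fun_prop]
lemma measurable_wignerEmbed (n : ℕ) : Measurable (wignerEmbed n) := by
  unfold wignerEmbed; fun_prop

lemma wignerNoise_gaussianReal_eq (n : ℕ) :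
    wignerNoise (gaussianReal 0 1) (gaussianReal 0 2) n
      = (gaussianPi (goeVariance n)).map (symmetrizeUpper n) := by
  unfold wignerNoise gaussianPi goeVariance
  congr with p
  split <;> rfl

instance (n : ℕ) : IsProbabilityMeasure (wignerNoise (gaussianReal 0 1) (gaussianReal 0 2) n) := by
  rw [wignerNoise_gaussianReal_eq]
  exact Measure.isProbabilityMeasure_map (by fun_prop)

lemma GWig0_eq_map (n : ℕ) : GWig0 n = (gaussianPi (goeVariance n)).map (wignerEmbed n) := by
  rw [GWig0, unspikedWigner, wignerNoise_gaussianReal_eq,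
    Measure.map_map (by fun_prop) (by fun_prop)]
  rfl

lemma GWig_eq_map (lam : ℝ) {n : ℕ} (ν : Measure (EuclideanSpace ℝ (Fin n))) [SFinite ν] :
    GWig lam ν = (ν.prod (gaussianPi (goeVariance n))).map
      fun q => wignerEmbed n (q.2 + wignerSpike lam n q.1) := by
  rw [GWig, spikedWigner, wignerNoise_gaussianReal_eq, ← Measure.map_id (μ := ν),
    Measure.map_prod_map _ _ measurable_id (by fun_prop), Measure.map_id,
    Measure.map_map (by fun_prop) (by fun_prop)]
  congr with q i j
  have hn : (√n : ℝ) ≠ 0 := by have := i.pos; positivity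
  simp only [Function.comp_apply, Prod.map_fst, Prod.map_snd, id_eq, wignerEmbed,
    symmetrizeUpper, wignerSpike, Pi.add_apply]
  by_cases hij : i ≤ j
  · simp only [if_pos hij]
    field_simp
    ring
  · simp only [if_neg hij, if_pos (le_of_not_ge hij)]
    field_simp
    ring

lemma sum_wignerSpike_mul (lam : ℝ) {n : ℕ} (x x' : EuclideanSpace ℝ (Fin n)) :
    ∑ p, wignerSpike lam n x p * wignerSpike lam n x' p / goeVariance n p
      = n * lam ^ 2 / 2 * inner ℝ x x' ^ 2 := by
  set f : Fin n × Fin n → ℝ :=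
    fun p => wignerSpike lam n x p * wignerSpike lam n x' p / goeVariance n p
  set t : Fin n × Fin n → ℝ := fun p => n * lam ^ 2 * ((x p.1 * x' p.1) * (x p.2 * x' p.2))
  have hsqrt : √(n : ℝ) ^ 2 = n := sq_sqrt n.cast_nonneg
  -- the weights `[i ≤ j] / goeVariance (i, j)` of a pair and of its transpose add up to one
  have hpair : ∀ p : Fin n × Fin n, f p + f p.swap = t p := fun p => by
    rcases lt_trichotomy p.1 p.2 with h | h | h
    · simp [f, t, wignerSpike, goeVariance, h.le, h.ne, h.not_ge, h.ne']
      linear_combination lam ^ 2 * x p.1 * x p.2 * x' p.1 * x' p.2 * hsqrt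
    · simp [f, t, wignerSpike, goeVariance, h]
      linear_combination lam ^ 2 * x p.2 * x p.2 * x' p.2 * x' p.2 * hsqrt
    · simp [f, t, wignerSpike, goeVariance, h.le, h.ne, h.not_ge, h.ne']
      linear_combination lam ^ 2 * x p.1 * x p.2 * x' p.1 * x' p.2 * hsqrt
  have hswap : ∑ p : Fin n × Fin n, f p.swap = ∑ p, f p :=
    Fintype.sum_equiv (Equiv.prodComm _ _) _ _ fun _ => rfl
  have hinner : inner ℝ x x' ^ 2 = ∑ p : Fin n × Fin n, (x p.1 * x' p.1) * (x p.2 * x' p.2) := by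
    have : inner ℝ x x' = ∑ i, x i * x' i := by simp [PiLp.inner_apply, mul_comm]
    rw [this, Fintype.sum_prod_type, sq, Finset.sum_mul_sum]
  have htwice : 2 * ∑ p, f p = ∑ p, t p := by
    rw [two_mul]
    nth_rw 2 [← hswap]
    rw [← Finset.sum_add_distrib]
    exact Finset.sum_congr rfl fun p _ => hpair p
  have ht : ∑ p, t p = n * lam ^ 2 * ∑ p : Fin n × Fin n, (x p.1 * x' p.1) * (x p.2 * x' p.2) :=
    Finset.mul_sum _ _ _ |>.symm
  rw [hinner]
  linear_combination (htwice + ht) / 2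

lemma GWig_apply_le (lam : ℝ) (μ : ∀ n : ℕ, Measure (EuclideanSpace ℝ (Fin n))) (n : ℕ)
    [SFinite (μ n)] {A : Set (Fin n → Fin n → ℝ)} (hA : MeasurableSet A) :
    GWig lam (μ n) A ≤ GWig0 n A ^ (1 / 2 : ℝ) * wignerSecondMoment μ lam n ^ (1 / 2 : ℝ) := by
  have := map_prod_gaussianPi_add_apply_le (goeVariance_ne_zero n) (μ n)
    (measurable_wignerSpike lam n) (measurable_wignerEmbed n) hA
  simp_rw [sum_wignerSpike_mul] at this
  rwa [GWig_eq_map, GWig0_eq_map]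

lemma GWig_apply_le_restrict_add_compl (lam : ℝ) {n : ℕ} (μ : Measure (EuclideanSpace ℝ (Fin n)))
    [SFinite μ] {S : Set (EuclideanSpace ℝ (Fin n))} (hS : MeasurableSet S)
    (A : Set (Fin n → Fin n → ℝ)) :
    GWig lam μ A ≤ GWig lam (μ.restrict S) A + μ Sᶜ := by
  have hsplit : GWig lam μ = GWig lam (μ.restrict S) + GWig lam (μ.restrict Sᶜ) := by
    conv_lhs => rw [← Measure.restrict_add_restrict_compl hS (μ := μ)]
    rw [GWig, spikedWigner, Measure.add_prod, Measure.map_add _ _ (by fun_prop)]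
    rfl
  have hcompl : GWig lam (μ.restrict Sᶜ) Set.univ = μ Sᶜ := by
    rw [GWig, spikedWigner, Measure.map_apply (by fun_prop) .univ, Set.preimage_univ,
      ← Set.univ_prod_univ, Measure.prod_prod, Measure.restrict_apply_univ, measure_univ, mul_one]
  rw [hsplit, Measure.add_apply, ← hcompl]
  gcongr
  exact Set.subset_univ A

lemma GWig_apply_le_of_isSubgaussianVec {σ lam ε : ℝ}
    (μ : ∀ n : ℕ, Measure (EuclideanSpace ℝ (Fin n))) {n : ℕ} (hn : 0 < n) [SFinite (μ n)]
    (hsub : IsSubgaussianVec (μ n) (σ ^ 2 / n)) (hc : (σ * lam * (1 + ε)) ^ 2 < 1)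
    {A : Set (Fin n → Fin n → ℝ)} (hA : MeasurableSet A) :
    GWig lam (μ n) A ≤ GWig0 n A ^ (1 / 2 : ℝ)
        * ENNReal.ofReal (√(1 - (σ * lam * (1 + ε)) ^ 2))⁻¹ ^ (1 / 2 : ℝ)
      + μ n {x | ε < |‖x‖ - 1|} := by
  set S : ∀ m, Set (EuclideanSpace ℝ (Fin m)) := fun m => {x | |‖x‖ - 1| ≤ ε}
  have hS : MeasurableSet (S n) := measurableSet_le (by fun_prop) measurable_const
  have hcompl : (S n)ᶜ = {x | ε < |‖x‖ - 1|} := by ext; simp [S]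
  have hmoment : wignerSecondMoment (fun m => (μ m).restrict (S m)) lam n
      ≤ ENNReal.ofReal (√(1 - (σ * lam * (1 + ε)) ^ 2))⁻¹ := by
    have hscale : n * lam ^ 2 * (σ ^ 2 / n) * (1 + ε) ^ 2 = (σ * lam * (1 + ε)) ^ 2 := by
      field_simp
    have := lintegral_exp_inner_sq_restrict_le (μ n) (by positivity) (by positivity)
      hsub.2.2 (S := S n) (fun x (hx : |‖x‖ - 1| ≤ ε) => by linarith [(abs_le.mp hx).2])
      (hscale ▸ hc)
    rwa [hscale] at this
  calc GWig lam (μ n) A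
      ≤ GWig lam ((μ n).restrict (S n)) A + μ n (S n)ᶜ :=
        GWig_apply_le_restrict_add_compl lam _ hS _
    _ ≤ GWig0 n A ^ (1 / 2 : ℝ)
          * wignerSecondMoment (fun m => (μ m).restrict (S m)) lam n ^ (1 / 2 : ℝ)
          + μ n (S n)ᶜ := by
        gcongr
        exact GWig_apply_le lam (fun m => (μ m).restrict (S m)) n hA
    _ ≤ _ := by
        rw [hcompl]
        gcongr

theorem subgaussian_prior_contiguity_general (X : SpikePrior) (σ : ℝ)
    (hsub : ∀ n : ℕ, IsSubgaussianVec (X.μ n) (σ ^ 2 / n))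
    (lam : ℝ) (hlam : 0 ≤ lam) (hlt : lam < 1 / σ) :
    Contiguous (fun n => GWig lam (X.μ n)) GWig0 := by
  intro A hA hP
  have hσ : 0 < σ := one_div_pos.mp (hlam.trans_lt hlt)
  have hc : σ * lam < 1 := by rwa [lt_div_iff₀ hσ, mul_comm] at hlt
  set ε := (1 - σ * lam) / 2 with hε_def
  have hε : 0 < ε := by linarith
  have hcε : (σ * lam * (1 + ε)) ^ 2 < 1 := by
    have h0 : 0 ≤ σ * lam := by positivity
    have h1 : σ * lam * (1 + ε) < 1 := by rw [hε_def]; nlinarith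
    exact pow_lt_one₀ (by positivity) h1 two_ne_zero
  set B := ENNReal.ofReal (√(1 - (σ * lam * (1 + ε)) ^ 2))⁻¹
  have hlim : Tendsto (fun n => GWig0 n (A n) ^ (1 / 2 : ℝ) * B ^ (1 / 2 : ℝ)
      + X.μ n {x | ε < |‖x‖ - 1|}) atTop (𝓝 0) := by
    have hsqrt := ((ENNReal.continuous_rpow_const (y := 1 / 2)).tendsto 0).comp hP
    rw [ENNReal.zero_rpow_of_pos (by norm_num)] at hsqrt
    simpa using (ENNReal.Tendsto.mul_const hsqrt (.inr (by simp [B]))).add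
      (X.norm_tendsto_one ε hε)
  have hbound : ∀ n, 0 < n → GWig lam (X.μ n) (A n)
      ≤ GWig0 n (A n) ^ (1 / 2 : ℝ) * B ^ (1 / 2 : ℝ) + X.μ n {x | ε < |‖x‖ - 1|} :=
    fun n hn => have := X.isProb n; GWig_apply_le_of_isSubgaussianVec X.μ hn (hsub n) hcε (hA n)
  exact tendsto_of_tendsto_of_tendsto_of_le_of_le' tendsto_const_nhds hlim
    (.of_forall fun _ => zero_le) ((eventually_gt_atTop 0).mono hbound)

/-- **Proposition 3.9.** If the spike prior `X_n` is `(σ²/n)`-subgaussian (as an ℝⁿ-valued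
random variable) and `0 ≤ λ < 1/σ`, then `GWig(λ,X)` is contiguous to `GWig(0)`. -/
theorem subgaussian_prior_contiguity (X : SpikePrior) (σ : ℝ) (hσ : 0 < σ)
    (hsub : ∀ n : ℕ, IsSubgaussianVec (X.μ n) (σ ^ 2 / n))
    (lam : ℝ) (hlam : 0 ≤ lam) (hlt : lam < 1 / σ) :
    Contiguous (fun n => GWig lam (X.μ n)) GWig0 :=
  subgaussian_prior_contiguity_general X σ hsub lam hlam hlt

end
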